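/- arXiv:1802.02291 — 4 statements merged into one kernel-verified Lean document; each statement's English description precedes it below -/
import Mathlib

section
/- A set of contingency formulas Γ entails φ over the class of all c-models under the new neighborhood semantics if and only if Γ entails φ over the class of all neighborhood models under the old semantics. -/
inductive CForm : Type where
  | atom : ℕ → CForm
  | neg : CForm → CForm
  | conj : CForm → CForm → CForm
  | delta : CForm → CForm

/-- p → q abbreviates ¬(p ∧ ¬q) -/
def CForm.impl (φ ψ : CForm) : CForm := .neg (.conj φ (.neg ψ))
/-- p ∨ q abbreviates ¬(¬p ∧ ¬q) -/
def CForm.disj (φ ψ : CForm) : CForm := .neg (.conj (.neg φ) (.neg ψ))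

structure NbhModel (S : Type) where
  N : S → Set (Set S)
  V : ℕ → Set S

/-- new neighborhood semantics -/
def newSat {S : Type} (M : NbhModel S) : S → CForm → Prop
  | s, .atom p => s ∈ M.V p
  | s, .neg φ => ¬ newSat M s φ
  | s, .conj φ ψ => newSat M s φ ∧ newSat M s ψ
  | s, .delta φ => {t | newSat M t φ} ∈ M.N s

/-- old neighborhood semantics -/
def oldSat {S : Type} (M : NbhModel S) : S → CForm → Prop
  | s, .atom p => s ∈ M.V p
  | s, .neg φ => ¬ oldSat M s φ
  | s, .conj φ ψ => oldSat M s φ ∧ oldSat M s ψ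
  | s, .delta φ => {t | oldSat M t φ} ∈ M.N s ∨ {t | oldSat M t φ}ᶜ ∈ M.N s

/-- property (c): closure under complements -/
def HasC {S : Type} (N : S → Set (Set S)) : Prop :=
  ∀ s X, X ∈ N s → Xᶜ ∈ N s

/-- a c-model -/
def IsCModel {S : Type} (M : NbhModel S) : Prop := HasC M.N

/-- the c-variation of a neighborhood model -/
def cVar {S : Type} (M : NbhModel S) : NbhModel S :=
  ⟨fun s => {X | X ∈ M.N s ∨ Xᶜ ∈ M.N s}, M.V⟩

structure KModel (S : Type) where
  R : S → S → Prop
  V : ℕ → Set S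

/-- Kripke semantics for contingency logic -/
def kSat {S : Type} (M : KModel S) : S → CForm → Prop
  | s, .atom p => s ∈ M.V p
  | s, .neg φ => ¬ kSat M s φ
  | s, .conj φ ψ => kSat M s φ ∧ kSat M s ψ
  | s, .delta φ => ∀ t u, M.R s t → M.R s u → (kSat M t φ ↔ kSat M u φ)

/-- the qf-variation of a Kripke model -/
def qfVar {S : Type} (M : KModel S) : NbhModel S :=
  ⟨fun s => {X | {t | M.R s t} ⊆ X ∨ {t | M.R s t} ⊆ Xᶜ}, M.V⟩

/-- (U,U') is Z-coherent -/
def ZCoherent {S S' : Type} (Z : S → S' → Prop) (U : Set S) (U' : Set S') : Prop :=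
  ∀ x y, Z x y → (x ∈ U ↔ y ∈ U')

/-- a c-bisimulation (also: qf-bisimulation, monotonic c-bisimulation): atoms agree
and Z-coherent pairs are matched in neighborhoods -/
def IsCBisim {S S' : Type} (M : NbhModel S) (M' : NbhModel S') (Z : S → S' → Prop) : Prop :=
  ∀ s s', Z s s' →
    ((∀ p, s ∈ M.V p ↔ s' ∈ M'.V p) ∧
     ∀ U U', ZCoherent Z U U' → (U ∈ M.N s ↔ U' ∈ M'.N s'))

/-- an nbh-Δ-bisimulation -/
def IsNbhDeltaBisim {S S' : Type} (M : NbhModel S) (M' : NbhModel S') (Z : S → S' → Prop) : Prop :=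
  ∀ s s', Z s s' →
    ((∀ p, s ∈ M.V p ↔ s' ∈ M'.V p) ∧
     ∀ U U', ZCoherent Z U U' →
       ((U ∈ M.N s ∨ Uᶜ ∈ M.N s) ↔ (U' ∈ M'.N s' ∨ U'ᶜ ∈ M'.N s')))

/-- property (s): closure under supersets (monotonicity) -/
def HasMono {S : Type} (N : S → Set (Set S)) : Prop :=
  ∀ s X Y, X ∈ N s → X ⊆ Y → Y ∈ N s

/-- a c-monotonic bisimulation -/
def IsCMonBisim {S S' : Type} (M : NbhModel S) (M' : NbhModel S') (Z : S → S' → Prop) : Prop :=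
  ∀ s s', Z s s' →
    ((∀ p, s ∈ M.V p ↔ s' ∈ M'.V p) ∧
     (∀ X, X ∈ M.N s → ∃ X' ∈ M'.N s', ∀ x' ∈ X', ∃ x ∈ X, Z x x') ∧
     (∀ X', X' ∈ M'.N s' → ∃ X ∈ M.N s, ∀ x ∈ X, ∃ x' ∈ X', Z x x'))

/-- quasi-filter: (n), (i), (c), (ws) -/
def IsQuasiFilter {S : Type} (N : S → Set (Set S)) : Prop :=
  ∀ s, (Set.univ ∈ N s) ∧
    (∀ X Y, X ∈ N s → Y ∈ N s → X ∩ Y ∈ N s) ∧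
    (∀ X, X ∈ N s → Xᶜ ∈ N s) ∧
    (∀ X, X ∈ N s → ∀ Y Z : Set S, X ∪ Y ∈ N s ∨ Xᶜ ∪ Z ∈ N s)

/-- a rel-Δ-bisimulation between Kripke models -/
def IsRelDeltaBisim {S S' : Type} (M : KModel S) (M' : KModel S') (Z : S → S' → Prop) : Prop :=
  ∀ s s', Z s s' →
    ((∀ p, s ∈ M.V p ↔ s' ∈ M'.V p) ∧
     ∀ U U', ZCoherent Z U U' →
       (({t | M.R s t} ⊆ U ∨ {t | M.R s t} ⊆ Uᶜ) ↔
        ({t | M'.R s' t} ⊆ U' ∨ {t | M'.R s' t} ⊆ U'ᶜ)))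

/-! Under the old semantics `Δφ` only asks for `φ^M` or its complement to be a neighborhood, which
is what the new semantics asks of a model whose neighborhoods are closed under complements.
Hence the old semantics of a model is the new semantics of its c-variation, and on a c-model
the two semantics coincide, so countermodels transfer in both directions. -/

theorem newSat_iff_oldSat {S : Type} {M M' : NbhModel S} (hV : M'.V = M.V)
    (hN : ∀ s X, X ∈ M'.N s ↔ X ∈ M.N s ∨ Xᶜ ∈ M.N s) (φ : CForm) (s : S) :
    newSat M' s φ ↔ oldSat M s φ := by
  induction φ generalizing s with
  | atom p => simp only [newSat, oldSat, hV]
  | neg φ ih => simp only [newSat, oldSat, ih]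
  | conj φ ψ ihφ ihψ => simp only [newSat, oldSat, ihφ, ihψ]
  | delta φ ih =>
    rw [newSat, oldSat, show {t | newSat M' t φ} = {t | oldSat M t φ} from Set.ext ih]
    exact hN s _

theorem isCModel_cVar {S : Type} (M : NbhModel S) : IsCModel (cVar M) := by
  rintro s X (hX | hX)
  · exact Or.inr (by rwa [compl_compl])
  · exact Or.inl hX

theorem newSat_cVar_iff_oldSat {S : Type} (M : NbhModel S) (φ : CForm) (s : S) :
    newSat (cVar M) s φ ↔ oldSat M s φ :=
  newSat_iff_oldSat (M := M) (M' := cVar M) rfl (fun _ _ => Iff.rfl) φ s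

theorem newSat_iff_oldSat_of_isCModel {S : Type} {M : NbhModel S} (hM : IsCModel M)
    (φ : CForm) (s : S) : newSat M s φ ↔ oldSat M s φ :=
  newSat_iff_oldSat rfl
    (fun s X => ⟨Or.inl, fun h => h.elim id fun hX => by simpa using hM s _ hX⟩) φ s

/-- entailment over c-models under the new semantics coincides with
entailment over all neighborhood models under the old semantics. -/
theorem stmt4 (Γ : Set CForm) (φ : CForm) :
    (∀ (S : Type) (M : NbhModel S) (s : S), IsCModel M →
      (∀ ψ ∈ Γ, newSat M s ψ) → newSat M s φ) ↔
    (∀ (S : Type) (M : NbhModel S) (s : S),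
      (∀ ψ ∈ Γ, oldSat M s ψ) → oldSat M s φ) := by
  constructor
  · intro hnew S M s hΓ
    have hsat := newSat_cVar_iff_oldSat M
    exact (hsat φ s).1 <|
      hnew S (cVar M) s (isCModel_cVar M) fun ψ hψ => (hsat ψ s).2 (hΓ ψ hψ)
  · intro hold S M s hM hΓ
    have hsat := newSat_iff_oldSat_of_isCModel hM
    exact (hsat φ s).2 <| hold S M s fun ψ hψ => (hsat ψ s).1 (hΓ ψ hψ)
end

section
/- If M and M' are c-models and Z is a c-bisimulation between them, then Z is an nbh-Δ-bisimulation between M and M'. Consequently, between c-models, Z is a c-bisimulation if and only if it is an nbh-Δ-bisimulation. -/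
/-!
Complementation preserves Z-coherence, so a c-bisimulation matches both disjuncts of the
nbh-Δ condition. Conversely, an nbh-Δ-bisimulation is literally a c-bisimulation between the
c-variations, and a model closed under complements is its own c-variation.
-/

theorem ZCoherent.compl {S S' : Type} {Z : S → S' → Prop} {U : Set S} {U' : Set S'}
    (h : ZCoherent Z U U') : ZCoherent Z Uᶜ U'ᶜ :=
  fun x y hxy => not_congr (h x y hxy)

theorem IsCBisim.isNbhDeltaBisim {S S' : Type} {M : NbhModel S} {M' : NbhModel S'}
    {Z : S → S' → Prop} (h : IsCBisim M M' Z) : IsNbhDeltaBisim M M' Z := by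
  intro s s' hz
  obtain ⟨hV, hN⟩ := h s s' hz
  exact ⟨hV, fun U U' hU => or_congr (hN U U' hU) (hN _ _ hU.compl)⟩

theorem isNbhDeltaBisim_iff_isCBisim_cVar {S S' : Type} {M : NbhModel S} {M' : NbhModel S'}
    {Z : S → S' → Prop} : IsNbhDeltaBisim M M' Z ↔ IsCBisim (cVar M) (cVar M') Z :=
  Iff.rfl

theorem IsCModel.cVar_eq {S : Type} {M : NbhModel S} (hM : IsCModel M) : cVar M = M := by
  unfold cVar
  congr 1
  ext s X
  exact or_iff_left_of_imp fun hX => compl_compl X ▸ hM s Xᶜ hX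

theorem stmt7_general {S S' : Type} (M : NbhModel S) (M' : NbhModel S')
    (hM : IsCModel M) (hM' : IsCModel M') (Z : S → S' → Prop) :
    (IsCBisim M M' Z → IsNbhDeltaBisim M M' Z) ∧
    (IsCBisim M M' Z ↔ IsNbhDeltaBisim M M' Z) := by
  have fwd : IsCBisim M M' Z → IsNbhDeltaBisim M M' Z := IsCBisim.isNbhDeltaBisim
  refine ⟨fwd, fwd, fun h => ?_⟩
  rwa [isNbhDeltaBisim_iff_isCBisim_cVar, hM.cVar_eq, hM'.cVar_eq] at h

/-- between c-models, every c-bisimulation is an nbh-Δ-bisimulation;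
consequently the two notions coincide. -/
theorem stmt7 {S S' : Type} (M : NbhModel S) (M' : NbhModel S')
    (hM : IsCModel M) (hM' : IsCModel M') (Z : S → S' → Prop)
    (hne : ∃ s s', Z s s') :
    (IsCBisim M M' Z → IsNbhDeltaBisim M M' Z) ∧
    (IsCBisim M M' Z ↔ IsNbhDeltaBisim M M' Z) :=
  stmt7_general M M' hM hM' Z
end

section
/- Every finite quasi-filter model M = (S, N, V) has a pointwise equivalent Kripke model M' = (S, R, V), where sRt iff (t ∈ X for some X ∈ N(s)) and {t} ∉ N(s): for all contingency formulas φ and all s ∈ S, M',s ⊨ φ under Kripke semantics iff M,s ⊨ φ under the new neighborhood semantics. -/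
/-!
Fix `s` and let `D` be the set of points `t` with `{t} ∉ N(s)`; these are exactly the
`R`-successors of `s`, since `S ∈ N(s)`. In a finite quasi-filter, `X ∈ N(s)` holds iff `X`
does not split `D`: a set disjoint from `D` is a finite union of neighbourhood singletons,
and if `X ∈ N(s)` separated `t ∈ D` from `u ∈ D`, then (ws) would put `{t}ᶜ` or `{u}ᶜ`,
hence `{t}` or `{u}`, into `N(s)`. So `N` is the qf-variation of the Kripke model, whose
Kripke semantics agrees with the new neighbourhood semantics of its qf-variation.
-/

open Set

theorem Set.subset_or_subset_compl_iff {α : Type*} {D A : Set α} :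
    D ⊆ A ∨ D ⊆ Aᶜ ↔ ∀ t u, t ∈ D → u ∈ D → (t ∈ A ↔ u ∈ A) := by
  constructor
  · rintro (h | h) t u ht hu
    · exact iff_of_true (h ht) (h hu)
    · exact iff_of_false (h ht) (h hu)
  · intro h
    by_contra! hsplit
    obtain ⟨⟨t, htD, htA⟩, ⟨u, huD, huA⟩⟩ := And.imp not_subset.mp not_subset.mp hsplit
    exact htA ((h t u htD huD).mpr (not_not.mp huA))

theorem kSat_iff_newSat_qfVar {S : Type} (K : KModel S) (φ : CForm) (s : S) :
    kSat K s φ ↔ newSat (qfVar K) s φ := by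
  induction φ generalizing s with
  | atom p => rfl
  | neg φ ih => exact not_congr (ih s)
  | conj φ ψ ihφ ihψ => exact and_congr (ihφ s) (ihψ s)
  | delta φ ih =>
    have htruth : {t | newSat (qfVar K) t φ} = {t | kSat K t φ} := ext fun t => (ih t).symm
    show (∀ t u, K.R s t → K.R s u → _) ↔ {t | newSat (qfVar K) t φ} ∈ (qfVar K).N s
    rw [htruth]
    exact subset_or_subset_compl_iff.symm

namespace IsQuasiFilter

variable {S : Type} {N : S → Set (Set S)} (hqf : IsQuasiFilter N) (s : S)
include hqf

theorem compl_mem_iff {X : Set S} : Xᶜ ∈ N s ↔ X ∈ N s :=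
  ⟨fun h => compl_compl X ▸ (hqf s).2.2.1 _ h, (hqf s).2.2.1 X⟩

theorem empty_mem : (∅ : Set S) ∈ N s :=
  compl_univ (α := S) ▸ (hqf s).2.2.1 _ (hqf s).1

theorem union_mem {X Y : Set S} (hX : X ∈ N s) (hY : Y ∈ N s) : X ∪ Y ∈ N s := by
  rw [← compl_mem_iff hqf, compl_union]
  exact (hqf s).2.1 _ _ ((compl_mem_iff hqf s).mpr hX) ((compl_mem_iff hqf s).mpr hY)

theorem mem_of_forall_singleton_mem {A : Set S} (hA : A.Finite)
    (h : ∀ t ∈ A, {t} ∈ N s) : A ∈ N s := by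
  induction A, hA using Finite.induction_on with
  | empty => exact empty_mem hqf s
  | @insert a A _ _ ih =>
    rw [insert_eq]
    exact union_mem hqf s (h a (mem_insert a A)) (ih fun t ht => h t (mem_insert_of_mem a ht))

theorem singleton_mem_or_singleton_mem {A : Set S} {t u : S} (hA : A ∈ N s) (ht : t ∈ A)
    (hu : u ∉ A) : {t} ∈ N s ∨ {u} ∈ N s := by
  have hu_compl : A ∪ (Aᶜ \ {u}) = {u}ᶜ := by
    ext x; by_cases hx : x = u <;> by_cases hxA : x ∈ A <;> simp_all
  have ht_compl : Aᶜ ∪ (A \ {t}) = {t}ᶜ := by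
    ext x; by_cases hx : x = t <;> by_cases hxA : x ∈ A <;> simp_all
  rcases (hqf s).2.2.2 A hA (Aᶜ \ {u}) (A \ {t}) with h | h
  · rw [hu_compl, compl_mem_iff hqf] at h
    exact Or.inr h
  · rw [ht_compl, compl_mem_iff hqf] at h
    exact Or.inl h

theorem mem_iff [Finite S] {A : Set S} :
    A ∈ N s ↔ {t | {t} ∉ N s} ⊆ A ∨ {t | {t} ∉ N s} ⊆ Aᶜ := by
  constructor
  · intro hA
    by_contra! hsplit
    obtain ⟨⟨u, huD, huA⟩, ⟨t, htD, htA⟩⟩ := And.imp not_subset.mp not_subset.mp hsplit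
    exact (singleton_mem_or_singleton_mem hqf s hA (not_not.mp htA) huA).elim htD huD
  · have hsingletons {B : Set S} (hB : {t | {t} ∉ N s} ⊆ Bᶜ) : B ∈ N s :=
      mem_of_forall_singleton_mem hqf s (toFinite B) fun t ht => by
        by_contra htN
        exact hB htN ht
    rintro (h | h)
    · exact (compl_mem_iff hqf s).mp (hsingletons (by rwa [compl_compl]))
    · exact hsingletons h

theorem qfVar_eq [Finite S] (V : ℕ → Set S) :
    qfVar ⟨fun s t => (∃ X ∈ N s, t ∈ X) ∧ {t} ∉ N s, V⟩ = ⟨N, V⟩ := by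
  have hsucc (s : S) : {t | (∃ X ∈ N s, t ∈ X) ∧ {t} ∉ N s} = {t | {t} ∉ N s} :=
    ext fun t => and_iff_right ⟨univ, (hqf s).1, trivial⟩
  simp only [qfVar, hsucc, NbhModel.mk.injEq, and_true]
  funext s
  exact ext fun A => (mem_iff hqf s).symm

end IsQuasiFilter

/-- every finite quasi-filter model has a pointwise equivalent
Kripke model via sRt iff t belongs to some neighborhood of s and {t} ∉ N(s). -/
theorem stmt13 {S : Type} [Finite S] (M : NbhModel S) (hqf : IsQuasiFilter M.N) :
    ∀ (φ : CForm) (s : S),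
      kSat ⟨fun s t => (∃ X ∈ M.N s, t ∈ X) ∧ {t} ∉ M.N s, M.V⟩ s φ ↔
      newSat M s φ := by
  intro φ s
  rw [kSat_iff_newSat_qfVar, hqf.qfVar_eq]
end

section
/- Under the new neighborhood semantics, the formula Δp → Δ(p→q) ∨ Δ(¬p→r) defines the property (ws) on the class of all neighborhood frames: a frame F validates this formula iff for all s and all X,Y,Z ⊆ S, X ∈ N(s) implies X∪Y ∈ N(s) or (S\X)∪Z ∈ N(s). -/
section NewSemantics

variable {S : Type} (M : NbhModel S)

theorem newSat_impl (s : S) (φ ψ : CForm) :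
    newSat M s (φ.impl ψ) ↔ (newSat M s φ → newSat M s ψ) := by
  simp only [CForm.impl, newSat]
  tauto

theorem newSat_disj (s : S) (φ ψ : CForm) :
    newSat M s (φ.disj ψ) ↔ (newSat M s φ ∨ newSat M s ψ) := by
  simp only [CForm.disj, newSat]
  tauto

theorem setOf_newSat_atom (p : ℕ) : {t | newSat M t (.atom p)} = M.V p := rfl

theorem setOf_newSat_neg (φ : CForm) : {t | newSat M t (.neg φ)} = {t | newSat M t φ}ᶜ := rfl

theorem setOf_newSat_impl (φ ψ : CForm) :
    {t | newSat M t (φ.impl ψ)} = {t | newSat M t φ}ᶜ ∪ {t | newSat M t ψ} := by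
  ext t
  simp only [newSat_impl, Set.mem_union, Set.mem_compl_iff, Set.mem_ofPred_eq, imp_iff_not_or]

end NewSemantics

theorem newSat_ws_formula_iff {S : Type} (N : S → Set (Set S)) (V : ℕ → Set S) (s : S) :
    newSat ⟨N, V⟩ s (.impl (.delta (.atom 0))
        (.disj (.delta (.impl (.atom 0) (.atom 1)))
               (.delta (.impl (.neg (.atom 0)) (.atom 2))))) ↔
      (V 0 ∈ N s → (V 0)ᶜ ∪ V 1 ∈ N s ∨ V 0 ∪ V 2 ∈ N s) := by
  simp only [newSat_impl, newSat_disj, newSat.eq_4, ↓setOf_newSat_impl, ↓setOf_newSat_neg,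
    ↓setOf_newSat_atom, compl_compl]

theorem stmt17_general {S : Type} (N : S → Set (Set S)) :
    (∀ (V : ℕ → Set S) (s : S),
      newSat ⟨N, V⟩ s (.impl (.delta (.atom 0))
        (.disj (.delta (.impl (.atom 0) (.atom 1)))
               (.delta (.impl (.neg (.atom 0)) (.atom 2)))))) ↔
    (∀ (s : S) (X : Set S), X ∈ N s → ∀ Y Z : Set S, X ∪ Y ∈ N s ∨ Xᶜ ∪ Z ∈ N s) := by
  simp only [newSat_ws_formula_iff]
  constructor
  · intro hvalid s X hX Y Z
    exact (hvalid (fun | 0 => X | 1 => Z | _ => Y) s hX).symm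
  · intro hws V s hX
    exact (hws s (V 0) hX (V 2) (V 1)).symm

/-- on all neighborhood frames, Δp → Δ(p→q) ∨ Δ(¬p→r)
defines property (ws). -/
theorem stmt17 {S : Type} [Nonempty S] (N : S → Set (Set S)) :
    (∀ (V : ℕ → Set S) (s : S),
      newSat ⟨N, V⟩ s (.impl (.delta (.atom 0))
        (.disj (.delta (.impl (.atom 0) (.atom 1)))
               (.delta (.impl (.neg (.atom 0)) (.atom 2)))))) ↔
    (∀ (s : S) (X : Set S), X ∈ N s → ∀ Y Z : Set S, X ∪ Y ∈ N s ∨ Xᶜ ∪ Z ∈ N s) :=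
  stmt17_general N
end
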